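/- arXiv:2605.07864 — 2 statements merged into one kernel-verified Lean document; each statement's English description precedes it below -/
import Mathlib

section
/- For natural numbers k, q and any integer r and integer exponent l, the operator identity Σ_{j=0}^{min(k,q)} (−1)^j C(k, j) (1/(q−j)!) ∂_E^{q−j} (E^{−r−j} · E^l) = (1/q!) E^k ∂_E^q (E^{−k−r} · E^l) holds as an identity of Laurent polynomial functions in the variable E, where ∂_E denotes differentiation in E. -/
/-- Falling-factorial coefficient `m(m−1)⋯(m−n+1)` arising from `∂_E^n E^m`. -/
def fallFact (m : ℤ) (n : ℕ) : ℚ :=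
  ∏ i ∈ Finset.range n, ((m : ℚ) - i)

noncomputable def B (m : ℤ) (q : ℕ) : ℚ := fallFact m q / (Nat.factorial q)

lemma fallFact_zero (m : ℤ) : fallFact m 0 = 1 := by simp [fallFact]

lemma fallFact_succ' (m : ℤ) (q : ℕ) : fallFact m (q + 1) = fallFact (m - 1) q * m := by
  rw [fallFact, Finset.prod_range_succ']
  simp only [Nat.cast_zero, sub_zero, fallFact]
  congr 1
  apply Finset.prod_congr rfl
  intro i _
  push_cast
  ring

lemma fallFact_succ (m : ℤ) (q : ℕ) : fallFact m (q + 1) = fallFact m q * (m - q) := by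
  rw [fallFact, Finset.prod_range_succ]; rfl

lemma B_zero (m : ℤ) : B m 0 = 1 := by simp [B, fallFact_zero]

lemma B_pascal (m : ℤ) (q : ℕ) : B m (q + 1) = B (m - 1) (q + 1) + B (m - 1) q := by
  have hq : ((Nat.factorial q : ℚ)) ≠ 0 := Nat.cast_ne_zero.mpr (Nat.factorial_ne_zero q)
  have hq1 : ((Nat.factorial (q+1) : ℚ)) ≠ 0 := Nat.cast_ne_zero.mpr (Nat.factorial_ne_zero _)
  rw [B, B, B, fallFact_succ', fallFact_succ]
  rw [Nat.factorial_succ]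
  push_cast
  field_simp
  ring

lemma peel (m : ℤ) (q : ℕ) (c : ℕ → ℕ) :
    (∑ j ∈ Finset.range (q + 1 + 1), (-1 : ℚ) ^ j * (c j) * B (m - j) (q + 1 - j))
    = (∑ i ∈ Finset.range (q + 1), (-1 : ℚ) ^ (i+1) * (c (i+1)) * B (m - (i+1)) (q - i))
      + (c 0) * B m (q + 1) := by
  rw [Finset.sum_range_succ']
  simp only [Nat.cast_zero, sub_zero, pow_zero, one_mul, Nat.add_sub_cancel]
  congr 1
  apply Finset.sum_congr rfl
  intro i _
  have : q + 1 - (i + 1) = q - i := by omega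
  rw [this]
  push_cast
  ring_nf

lemma key (k : ℕ) : ∀ (q : ℕ) (m : ℤ),
    ∑ j ∈ Finset.range (q + 1), (-1 : ℚ) ^ j * (Nat.choose k j) * B (m - j) (q - j)
      = B (m - k) q := by
  induction k with
  | zero =>
    intro q m
    rw [Finset.sum_eq_single 0]
    · simp
    · intro b _ hb
      simp [Nat.choose_eq_zero_of_lt (Nat.pos_of_ne_zero hb)]
    · simp
  | succ k ih =>
    intro q m
    cases q with
    | zero => simp [B_zero]
    | succ q =>
      rw [peel]
      have h1 := ih q (m - 1)
      have h2 := ih (q + 1) m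
      rw [peel] at h2
      simp only [Nat.choose_succ_succ, Nat.choose_zero_right, Nat.cast_one, one_mul,
        Nat.cast_add] at *
      have expand : ∀ i ∈ Finset.range (q + 1),
          (-1 : ℚ) ^ (i+1) * ((Nat.choose k i : ℚ) + (Nat.choose k (i+1) : ℚ)) * B (m - (i+1)) (q - i)
          = -((-1 : ℚ) ^ i * (Nat.choose k i : ℚ) * B ((m-1) - i) (q - i))
            + (-1 : ℚ) ^ (i+1) * (Nat.choose k (i+1) : ℚ) * B (m - (i+1)) (q - i) := by
        intro i _
        have : (m : ℤ) - (i + 1) = (m - 1) - i := by ring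
        rw [this]
        ring
      rw [Finset.sum_congr rfl expand, Finset.sum_add_distrib, Finset.sum_neg_distrib]
      have h3 := B_pascal (m - k) q
      have e1 : (m : ℤ) - 1 - (k : ℕ) = m - k - 1 := by ring
      have e2 : (m : ℤ) - ((k : ℕ) + 1) = m - k - 1 := by ring
      rw [e2]
      rw [e1] at h1
      linear_combination h2 + h3 - h1

/-- The operator identity
`Σ_j (−1)^j C(k,j) (1/(q−j)!) ∂_E^{q−j} (E^{−r−j} E^l) = (1/q!) E^k ∂_E^q (E^{−k−r} E^l)`
tested on the Laurent monomial `E^l`, as an identity of Laurent-polynomial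
functions of the nonzero variable `E`, where `∂_E^n E^m = m(m−1)⋯(m−n+1) E^{m−n}`. -/
theorem operator_identity_on_monomials (k q : ℕ) (r l : ℤ) (E : ℚ) (hE : E ≠ 0) :
    ∑ j ∈ Finset.range (min k q + 1),
      (-1 : ℚ) ^ j * (Nat.choose k j) * (1 / (Nat.factorial (q - j))) *
        (fallFact (-r - j + l) (q - j) * E ^ ((-r - (j : ℤ) + l) - ((q : ℤ) - (j : ℤ))))
      = (1 / (Nat.factorial q)) * E ^ (k : ℤ) *
          (fallFact (-(k : ℤ) - r + l) q * E ^ ((-(k : ℤ) - r + l) - (q : ℤ))) := by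
  set m : ℤ := -r + l with hm
  -- extend the sum to range (q+1)
  have hext : ∑ j ∈ Finset.range (min k q + 1),
      (-1 : ℚ) ^ j * (Nat.choose k j) * (1 / (Nat.factorial (q - j))) *
        (fallFact (-r - j + l) (q - j) * E ^ ((-r - (j : ℤ) + l) - ((q : ℤ) - (j : ℤ))))
      = ∑ j ∈ Finset.range (q + 1),
      (-1 : ℚ) ^ j * (Nat.choose k j) * (1 / (Nat.factorial (q - j))) *
        (fallFact (-r - j + l) (q - j) * E ^ ((-r - (j : ℤ) + l) - ((q : ℤ) - (j : ℤ)))) := by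
    apply Finset.sum_subset
    · intro x hx
      simp only [Finset.mem_range] at *
      omega
    · intro j hj hj2
      simp only [Finset.mem_range] at hj hj2
      have hkj : k < j := by omega
      simp [Nat.choose_eq_zero_of_lt hkj]
  rw [hext]
  have hterm : ∀ j ∈ Finset.range (q + 1),
      (-1 : ℚ) ^ j * (Nat.choose k j) * (1 / (Nat.factorial (q - j))) *
        (fallFact (-r - j + l) (q - j) * E ^ ((-r - (j : ℤ) + l) - ((q : ℤ) - (j : ℤ))))
      = ((-1 : ℚ) ^ j * (Nat.choose k j) * B (m - j) (q - j)) * E ^ (l - r - q) := by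
    intro j _
    have e1 : (-r - (j : ℤ) + l) - ((q : ℤ) - (j : ℤ)) = l - r - q := by ring
    have e2 : -r - (j : ℤ) + l = m - j := by rw [hm]; ring
    rw [e1, e2, B]
    ring
  rw [Finset.sum_congr rfl hterm, ← Finset.sum_mul, key k q m]
  have e3 : -(k : ℤ) - r + l = m - k := by rw [hm]; ring
  have e4 : E ^ (k : ℤ) * E ^ ((-(k : ℤ) - r + l) - (q : ℤ)) = E ^ (l - r - q) := by
    rw [← zpow_add₀ hE]
    congr 1
    ring
  rw [e3, B]
  calc fallFact (m - k) q / (Nat.factorial q) * E ^ (l - r - q)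
      = 1 / (Nat.factorial q) * (fallFact (m - k) q * (E ^ (k:ℤ) * E ^ ((m - k) - (q:ℤ)))) := by
        rw [e3] at e4
        rw [e4]; ring
    _ = _ := by ring
end

section
/- Fix ι = 1 (the Maxwell case) and define, for a polynomial τ_s of degree ≤ s in z, the differential operator T(τ_s) = Σ_{k=0}^{s} ((−1)^{k+1}/(s−k)!) (∂_z^{s−k} τ_s) · ∂_E^{s−k} ∘ M_{E^{−k}} ∘ ∂_z^{k}, acting on Laurent-polynomial functions of (E, z), where M_{E^{−k}} is multiplication by E^{−k}. Then for any natural numbers n, m and any polynomials τ_n, τ_m satisfying the wedge conditions deg τ_n ≤ n and deg τ_m ≤ m, the operators commute: [T(τ_n), T(τ_m)] = 0 on the space spanned by monomials E^a z^b (a ∈ ℤ, b ∈ ℕ). -/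
open Polynomial Finset

/-- Falling factorial `x (x-1) ⋯ (x-k+1)` in `ℚ`. -/
def ff (x : ℚ) (k : ℕ) : ℚ := ∏ i ∈ Finset.range k, (x - i)

lemma ff_zero (x : ℚ) : ff x 0 = 1 := by simp [ff]

lemma ff_succ (x : ℚ) (k : ℕ) : ff x (k + 1) = ff x k * (x - k) := by
  simp [ff, Finset.prod_range_succ]

lemma ff_add (x : ℚ) (c d : ℕ) : ff x (c + d) = ff x c * ff (x - c) d := by
  rw [ff, ff, ff, Finset.prod_range_add]
  congr 1
  refine Finset.prod_congr rfl fun i _ => ?_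
  push_cast; ring

lemma ff_nat_lt {N k : ℕ} (h : N < k) : ff (N : ℚ) k = 0 := by
  refine Finset.prod_eq_zero (Finset.mem_range.mpr h) ?_
  simp

lemma ff_natCast (N k : ℕ) : (N.descFactorial k : ℚ) = ff (N : ℚ) k := by
  induction k with
  | zero => simp [ff]
  | succ k ih =>
    rcases le_or_gt (k + 1) N with h | h
    · rw [Nat.descFactorial_succ, ff_succ, ← ih, Nat.cast_mul, Nat.cast_sub (by omega)]
      ring
    · rw [Nat.descFactorial_eq_zero_iff_lt.mpr h, ff_succ]
      rcases Nat.lt_or_ge N k with h2 | h2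
      · rw [ff_nat_lt h2]; simp
      · have : N = k := by omega
        subst this; simp

lemma ff_neg (x : ℚ) (j : ℕ) : ff (-x - 1) j = (-1) ^ j * ff (x + j) j := by
  have h1 : ff (x + j) j = ∏ i ∈ Finset.range j, (x + 1 + i) := by
    rw [ff, ← Finset.prod_range_reflect]
    refine Finset.prod_congr rfl fun i hi => ?_
    rw [Finset.mem_range] at hi
    have e : ((j - 1 - i : ℕ) : ℚ) = (j : ℚ) - 1 - i := by
      rw [Nat.cast_sub (by omega), Nat.cast_sub (by omega)]
      push_cast; ring
    rw [e]; ring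
  rw [h1, ff, Finset.pow_eq_prod_const, ← Finset.prod_mul_distrib]
  refine Finset.prod_congr rfl fun i _ => ?_
  ring

lemma ff_vandermonde (p : ℕ) (u w : ℚ) :
    ff (u + w) p = ∑ j ∈ Finset.range (p + 1),
      (p.choose j : ℚ) * ff u (p - j) * ff w j := by
  induction p with
  | zero => simp [ff]
  | succ p ih =>
    set A : ℕ → ℚ := fun j => (p.choose j : ℚ) * ff u (p + 1 - j) * ff w j with hA
    set B : ℕ → ℚ := fun j => (p.choose j : ℚ) * ff u (p - j) * ff w (j + 1) with hB
    have h1 : ff (u + w) (p + 1) = ∑ j ∈ Finset.range (p + 1), (A j + B j) := by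
      rw [ff_succ, ih, Finset.sum_mul]
      refine Finset.sum_congr rfl fun j hj => ?_
      rw [Finset.mem_range] at hj
      have hj' : j ≤ p := by omega
      have e1 : p + 1 - j = (p - j) + 1 := by omega
      rw [hA, hB]
      simp only []
      rw [e1, ff_succ, ff_succ (w) j]
      have e2 : ((p - j : ℕ) : ℚ) = (p : ℚ) - j := by
        rw [Nat.cast_sub hj']
      rw [e2]; ring
    rw [h1, Finset.sum_add_distrib]
    have hg : ∀ j ∈ Finset.range (p + 1),
        ((p + 1).choose (j + 1) : ℚ) * ff u (p + 1 - (j + 1)) * ff w (j + 1)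
          = B j + A (j + 1) := by
      intro j hj
      simp only [hA, hB, Nat.choose_succ_succ, Nat.succ_sub_succ, Nat.succ_eq_add_one]
      push_cast
      ring
    rw [Finset.sum_range_succ' (fun j => ((p + 1).choose j : ℚ) * ff u (p + 1 - j) * ff w j) (p + 1)]
    rw [Finset.sum_congr rfl hg]
    have hA0 : ((p + 1).choose 0 : ℚ) * ff u (p + 1 - 0) * ff w 0 = A 0 := by
      simp [hA]
    rw [hA0, Finset.sum_add_distrib]
    have hAsum : ∑ j ∈ Finset.range (p + 1), A (j + 1) + A 0
        = ∑ j ∈ Finset.range (p + 1), A j := by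
      rw [← Finset.sum_range_succ' A (p + 1), Finset.sum_range_succ]
      have : A (p + 1) = 0 := by
        simp [hA, Nat.choose_eq_zero_of_lt (by omega : p < p + 1)]
      rw [this, add_zero]
    calc ∑ j ∈ Finset.range (p + 1), A j + ∑ j ∈ Finset.range (p + 1), B j
        = ∑ j ∈ Finset.range (p + 1), B j
          + (∑ j ∈ Finset.range (p + 1), A (j + 1) + A 0) := by rw [hAsum]; ring
      _ = ∑ j ∈ Finset.range (p + 1), B j + ∑ j ∈ Finset.range (p + 1), A (j + 1) + A 0 := by
          ring

lemma ff_key (p : ℕ) (x y : ℚ) :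
    ∑ j ∈ Finset.range (p + 1),
      (-1 : ℚ) ^ (p - j) * (p.choose j : ℚ) * ff (x + j) j * ff y (p - j)
      = ff (x - y + p) p := by
  have hv := ff_vandermonde p y (-x - 1)
  have e1 : ff (y + (-x - 1)) p = (-1) ^ p * ff (x - y + p) p := by
    have h2 := ff_neg (x - y + p - p) p
    have e3 : -(x - y + p - p) - 1 = y + (-x - 1) := by ring
    have e4 : x - y + p - p + p = x - y + p := by ring
    rw [e3, e4] at h2
    exact h2
  rw [e1] at hv
  have hterm : ∀ j ∈ Finset.range (p + 1),
      (p.choose j : ℚ) * ff y (p - j) * ff (-x - 1) j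
        = (-1 : ℚ) ^ p *
          ((-1 : ℚ) ^ (p - j) * (p.choose j : ℚ) * ff (x + j) j * ff y (p - j)) := by
    intro j hj
    rw [Finset.mem_range] at hj
    rw [ff_neg]
    have hA : ((-1 : ℚ)) ^ (p - j) * (-1 : ℚ) ^ (p - j) = 1 := by
      rw [← pow_add, ← two_mul, pow_mul]; norm_num
    have hP : ((-1 : ℚ)) ^ p = (-1 : ℚ) ^ (p - j) * (-1 : ℚ) ^ j := by
      rw [← pow_add]; congr 1; omega
    rw [hP]
    linear_combination (-((-1 : ℚ)) ^ j * (p.choose j : ℚ) * ff (x + j) j * ff y (p - j)) * hA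
  rw [Finset.sum_congr rfl hterm, ← Finset.mul_sum] at hv
  have hne : ((-1 : ℚ)) ^ p ≠ 0 := by positivity
  field_simp at hv
  linarith [hv]

lemma CF (s p : ℕ) (hp : p ≤ s) (x y : ℚ) :
    ∑ k ∈ Finset.range (s + 1),
      (-1 : ℚ) ^ (k + 1) / (Nat.factorial (s - k)) * (p.descFactorial (s - k) : ℚ)
        * ff (x + ((s - k : ℕ) : ℚ)) (s - k) * ff (y + ((s - p : ℕ) : ℚ)) k
      = (-1 : ℚ) ^ (s - p + 1) * ff (y + ((s - p : ℕ) : ℚ)) (s - p) * ff (x - y + p) p := by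
  set h : ℕ → ℚ := fun j => (-1 : ℚ) ^ (s - j + 1) * (p.choose j : ℚ) * ff (x + (j : ℚ)) j
      * ff (y + ((s - p : ℕ) : ℚ)) (s - j) with hh
  have eq1 : ∑ k ∈ Finset.range (s + 1),
      (-1 : ℚ) ^ (k + 1) / (Nat.factorial (s - k)) * (p.descFactorial (s - k) : ℚ)
        * ff (x + ((s - k : ℕ) : ℚ)) (s - k) * ff (y + ((s - p : ℕ) : ℚ)) k
      = ∑ j ∈ Finset.range (s + 1), h j := by
    rw [← Finset.sum_range_reflect (fun k =>
      (-1 : ℚ) ^ (k + 1) / (Nat.factorial (s - k)) * (p.descFactorial (s - k) : ℚ)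
        * ff (x + ((s - k : ℕ) : ℚ)) (s - k) * ff (y + ((s - p : ℕ) : ℚ)) k) (s + 1)]
    refine Finset.sum_congr rfl fun j hj => ?_
    rw [Finset.mem_range] at hj
    have e1 : s + 1 - 1 - j = s - j := by omega
    have e2 : s - (s - j) = j := by omega
    simp only [e1, e2, hh]
    rw [Nat.descFactorial_eq_factorial_mul_choose]
    have hfac : (Nat.factorial j : ℚ) ≠ 0 := Nat.cast_ne_zero.mpr (Nat.factorial_ne_zero j)
    push_cast
    field_simp
  rw [eq1]
  have hvanish : ∀ j ∈ Finset.range (s + 1), j ∉ Finset.range (p + 1) → h j = 0 := by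
    intro j _ hj
    rw [Finset.mem_range] at hj
    have : p < j := by omega
    simp [hh, Nat.choose_eq_zero_of_lt this]
  rw [← Finset.sum_subset (Finset.range_subset_range.mpr (by omega : p + 1 ≤ s + 1)) hvanish]
  have eq2 : ∀ j ∈ Finset.range (p + 1),
      h j = (-1 : ℚ) ^ (s - p + 1) * ff (y + ((s - p : ℕ) : ℚ)) (s - p)
        * ((-1 : ℚ) ^ (p - j) * (p.choose j : ℚ) * ff (x + (j : ℚ)) j * ff y (p - j)) := by
    intro j hj
    rw [Finset.mem_range] at hj
    have hjp : j ≤ p := by omega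
    have e3 : s - j = (s - p) + (p - j) := by omega
    have e5 : s - p + (p - j) + 1 = (s - p + 1) + (p - j) := by omega
    simp only [hh]
    rw [e3, ff_add, e5, pow_add]
    have e4 : y + ((s - p : ℕ) : ℚ) - ((s - p : ℕ) : ℚ) = y := by ring
    rw [e4]
    ring
  rw [Finset.sum_congr rfl eq2, ← Finset.mul_sum, ff_key]

/-- The space spanned by monomials `E^a z^b` (`a ∈ ℤ`, `b ∈ ℕ`), encoded by the
coefficient function `(a, b) ↦` coefficient of `E^a z^b`. -/
abbrev MonSpace : Type := ℤ → ℕ → ℚ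

/-- `∂_E`: on monomials, `∂_E (E^a z^b) = a E^{a−1} z^b`. -/
def dE (f : MonSpace) : MonSpace := fun a b => ((a : ℚ) + 1) * f (a + 1) b

/-- `∂_z`: on monomials, `∂_z (E^a z^b) = b E^a z^{b−1}`. -/
def dz (f : MonSpace) : MonSpace := fun a b => ((b : ℚ) + 1) * f a (b + 1)

/-- Multiplication by `E^p` (`p ∈ ℤ`). -/
def mE (p : ℤ) (f : MonSpace) : MonSpace := fun a b => f (a - p) b

/-- Multiplication by a polynomial in `z`. -/
def mPoly (τ : Polynomial ℚ) (f : MonSpace) : MonSpace :=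
  fun a b => ∑ c ∈ Finset.range (b + 1), τ.coeff c * f a (b - c)

/-- The Maxwell (`ι = 1`) soft operator
`T(τ_s) = Σ_{k=0}^{s} ((−1)^{k+1}/(s−k)!) (∂_z^{s−k} τ_s) ∂_E^{s−k} E^{−k} ∂_z^{k}`. -/
noncomputable def Tmap (s : ℕ) (τ : Polynomial ℚ) (f : MonSpace) : MonSpace :=
  ∑ k ∈ Finset.range (s + 1),
    ((-1 : ℚ) ^ (k + 1) / (Nat.factorial (s - k))) •
      mPoly (derivative^[s - k] τ) (dE^[s - k] (mE (-(k : ℤ)) (dz^[k] f)))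

lemma dz_iter (k : ℕ) (f : MonSpace) (a : ℤ) (b : ℕ) :
    dz^[k] f a b = ff (((b + k : ℕ)) : ℚ) k * f a (b + k) := by
  induction k generalizing b with
  | zero => simp [ff]
  | succ k ih =>
    rw [Function.iterate_succ_apply', dz, ih]
    have e1 : b + 1 + k = b + (k + 1) := by omega
    rw [e1, ff_succ]
    have e2 : ((b + (k + 1) : ℕ) : ℚ) - (k : ℚ) = (b : ℚ) + 1 := by push_cast; ring
    rw [e2]
    ring

lemma dE_iter (j : ℕ) (f : MonSpace) (a : ℤ) (b : ℕ) :
    dE^[j] f a b = ff ((a : ℚ) + (j : ℚ)) j * f (a + j) b := by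
  induction j generalizing a with
  | zero => simp [ff]
  | succ j ih =>
    rw [Function.iterate_succ_apply', dE, ih]
    have e1 : a + 1 + (j : ℤ) = a + ((j : ℕ) + 1 : ℕ) := by push_cast; ring
    rw [e1, ff_succ]
    have e2 : ((a + 1 : ℤ) : ℚ) + (j : ℚ) = (a : ℚ) + ((j : ℕ) + 1 : ℕ) := by push_cast; ring
    rw [e2]
    have e3 : (a : ℚ) + ((j : ℕ) + 1 : ℕ) - ((j : ℕ) : ℚ) = (a : ℚ) + 1 := by push_cast; ring
    rw [e3]
    push_cast
    ring

lemma mPoly_Xpow (d : ℕ) (g : MonSpace) (a : ℤ) (b : ℕ) :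
    mPoly (X ^ d) g a b = if d ≤ b then g a (b - d) else 0 := by
  rw [mPoly]
  have : ∀ c ∈ Finset.range (b + 1),
      (X ^ d : ℚ[X]).coeff c * g a (b - c) = if d = c then g a (b - c) else 0 := by
    intro c _
    rw [coeff_X_pow]
    by_cases h : c = d
    · simp [h]
    · have h2 : ¬ d = c := fun hh => h hh.symm
      simp [h, h2]
  rw [Finset.sum_congr rfl this, Finset.sum_ite_eq]
  simp [Nat.lt_succ_iff]

lemma mPoly_smul (c : ℚ) (τ : ℚ[X]) (g : MonSpace) (a : ℤ) (b : ℕ) :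
    mPoly (c • τ) g a b = c * mPoly τ g a b := by
  rw [mPoly, mPoly, Finset.mul_sum]
  refine Finset.sum_congr rfl fun i _ => ?_
  rw [Polynomial.coeff_smul, smul_eq_mul]
  ring

lemma Tmap_Xpow (s p : ℕ) (hp : p ≤ s) (f : MonSpace) (a : ℤ) (b : ℕ) :
    Tmap s (X ^ p) f a b
      = ((-1 : ℚ) ^ (s - p + 1) * ff ((b : ℚ) + ((s - p : ℕ) : ℚ)) (s - p)
          * ff ((a : ℚ) - (b : ℚ) + (p : ℚ)) p) * f (a + s) (b + (s - p)) := by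
  rw [Tmap]
  simp only [Finset.sum_apply]
  have hterm : ∀ k ∈ Finset.range (s + 1),
      (((-1 : ℚ) ^ (k + 1) / (Nat.factorial (s - k))) •
        mPoly (derivative^[s - k] (X ^ p)) (dE^[s - k] (mE (-(k : ℤ)) (dz^[k] f)))) a b
      = ((-1 : ℚ) ^ (k + 1) / (Nat.factorial (s - k)) * (p.descFactorial (s - k) : ℚ)
          * ff ((a : ℚ) + ((s - k : ℕ) : ℚ)) (s - k) * ff ((b : ℚ) + ((s - p : ℕ) : ℚ)) k)
          * f (a + s) (b + (s - p)) := by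
    intro k hk
    rw [Finset.mem_range] at hk
    have hks : k ≤ s := by omega
    rw [Pi.smul_apply, Pi.smul_apply, smul_eq_mul]
    rw [Polynomial.iterate_derivative_X_pow_eq_smul, mPoly_smul, mPoly_Xpow]
    by_cases h1 : s - k ≤ p
    · by_cases h2 : p - (s - k) ≤ b
      · rw [if_pos h2, dE_iter, mE, dz_iter]
        have e1 : a + ((s - k : ℕ) : ℤ) - (-(k : ℤ)) = a + (s : ℤ) := by omega
        rw [e1]
        have e2 : b - (p - (s - k)) + k = b + (s - p) := by omega
        rw [e2]
        have e3 : ((b + (s - p) : ℕ) : ℚ) = (b : ℚ) + ((s - p : ℕ) : ℚ) := by push_cast; ring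
        rw [e3]
        ring
      · rw [if_neg h2]
        have e4 : (b : ℚ) + ((s - p : ℕ) : ℚ) = ((b + (s - p) : ℕ) : ℚ) := by push_cast; ring
        have e5 : ff ((b : ℚ) + ((s - p : ℕ) : ℚ)) k = 0 := by
          rw [e4, ff_nat_lt (by omega)]
        rw [e5]
        ring
    · rw [Nat.descFactorial_eq_zero_iff_lt.mpr (by omega : p < s - k), Nat.cast_zero]
      ring
  rw [Finset.sum_congr rfl hterm, ← Finset.sum_mul, CF s p hp ((a : ℚ)) ((b : ℚ))]

lemma iter_deriv_sum {ι : Type*} (j : ℕ) (F : Finset ι) (φ : ι → ℚ[X]) :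
    derivative^[j] (∑ i ∈ F, φ i) = ∑ i ∈ F, derivative^[j] (φ i) := by
  induction j with
  | zero => simp
  | succ j ih =>
    rw [Function.iterate_succ_apply', ih, map_sum]
    simp [Function.iterate_succ_apply']

lemma mPoly_sum {ι : Type*} (F : Finset ι) (φ : ι → ℚ[X]) (g : MonSpace) (a : ℤ) (b : ℕ) :
    mPoly (∑ i ∈ F, φ i) g a b = ∑ i ∈ F, mPoly (φ i) g a b := by
  simp only [mPoly, Polynomial.finset_sum_coeff, Finset.sum_mul]
  exact Finset.sum_comm

lemma Tmap_sum {ι : Type*} (s : ℕ) (F : Finset ι) (φ : ι → ℚ[X]) (g : MonSpace)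
    (a : ℤ) (b : ℕ) :
    Tmap s (∑ i ∈ F, φ i) g a b = ∑ i ∈ F, Tmap s (φ i) g a b := by
  simp only [Tmap, Finset.sum_apply, Pi.smul_apply, smul_eq_mul,
    iter_deriv_sum, mPoly_sum, Finset.mul_sum]
  exact Finset.sum_comm

lemma Tmap_smul (s : ℕ) (c : ℚ) (τ : ℚ[X]) (g : MonSpace) (a : ℤ) (b : ℕ) :
    Tmap s (c • τ) g a b = c * Tmap s τ g a b := by
  simp only [Tmap, Finset.sum_apply, Pi.smul_apply, smul_eq_mul,
    Polynomial.iterate_derivative_smul, mPoly_smul, Finset.mul_sum]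
  refine Finset.sum_congr rfl fun k _ => ?_
  ring

lemma Tmap_expand (s : ℕ) (τ : ℚ[X]) (hτ : τ.degree ≤ s) (g : MonSpace) (a : ℤ) (b : ℕ) :
    Tmap s τ g a b = ∑ p ∈ Finset.range (s + 1), τ.coeff p * Tmap s (X ^ p) g a b := by
  have hd : τ.natDegree < s + 1 :=
    Nat.lt_succ_of_le (Polynomial.natDegree_le_iff_degree_le.mpr hτ)
  conv_lhs => rw [Polynomial.as_sum_range' τ (s + 1) hd]
  rw [Tmap_sum]
  refine Finset.sum_congr rfl fun p _ => ?_
  rw [← Polynomial.smul_X_eq_monomial, Tmap_smul]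

/-- The eigenvalue of `T(z^p)` on the monomial `E^a z^b`. -/
noncomputable def Kf (s p : ℕ) (a : ℤ) (b : ℕ) : ℚ :=
  (-1 : ℚ) ^ (s - p + 1) * ff ((b : ℚ) + ((s - p : ℕ) : ℚ)) (s - p)
    * ff ((a : ℚ) - (b : ℚ) + (p : ℚ)) p

lemma Tmap_Xpow' (s p : ℕ) (hp : p ≤ s) (f : MonSpace) (a : ℤ) (b : ℕ) :
    Tmap s (X ^ p) f a b = Kf s p a b * f (a + s) (b + (s - p)) :=
  Tmap_Xpow s p hp f a b

lemma Ksym (p q u v : ℕ) (x y : ℚ) :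
    ((-1 : ℚ) ^ (u + 1) * ff (y + (u : ℚ)) u * ff (x - y + (p : ℚ)) p)
      * ((-1 : ℚ) ^ (v + 1) * ff (y + (u : ℚ) + (v : ℚ)) v * ff (x - y + (p : ℚ) + (q : ℚ)) q)
    = ((-1 : ℚ) ^ (v + 1) * ff (y + (v : ℚ)) v * ff (x - y + (q : ℚ)) q)
      * ((-1 : ℚ) ^ (u + 1) * ff (y + (v : ℚ) + (u : ℚ)) u * ff (x - y + (q : ℚ) + (p : ℚ)) p) := by
  have h1 : ff (y + (u : ℚ) + (v : ℚ)) (v + u)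
      = ff (y + (u : ℚ) + (v : ℚ)) v * ff (y + (u : ℚ)) u := by
    rw [ff_add, show y + (u : ℚ) + (v : ℚ) - (v : ℚ) = y + (u : ℚ) from by ring]
  have h2 : ff (y + (v : ℚ) + (u : ℚ)) (u + v)
      = ff (y + (v : ℚ) + (u : ℚ)) u * ff (y + (v : ℚ)) v := by
    rw [ff_add, show y + (v : ℚ) + (u : ℚ) - (u : ℚ) = y + (v : ℚ) from by ring]
  have h3 : ff (x - y + (p : ℚ) + (q : ℚ)) (q + p)
      = ff (x - y + (p : ℚ) + (q : ℚ)) q * ff (x - y + (p : ℚ)) p := by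
    rw [ff_add, show x - y + (p : ℚ) + (q : ℚ) - (q : ℚ) = x - y + (p : ℚ) from by ring]
  have h4 : ff (x - y + (q : ℚ) + (p : ℚ)) (p + q)
      = ff (x - y + (q : ℚ) + (p : ℚ)) p * ff (x - y + (q : ℚ)) q := by
    rw [ff_add, show x - y + (q : ℚ) + (p : ℚ) - (p : ℚ) = x - y + (q : ℚ) from by ring]
  have h2' : ff (y + (u : ℚ) + (v : ℚ)) (v + u) = ff (y + (v : ℚ) + (u : ℚ)) (u + v) := by
    rw [show y + (u : ℚ) + (v : ℚ) = y + (v : ℚ) + (u : ℚ) from by ring, Nat.add_comm v u]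
  have h4' : ff (x - y + (p : ℚ) + (q : ℚ)) (q + p) = ff (x - y + (q : ℚ) + (p : ℚ)) (p + q) := by
    rw [show x - y + (p : ℚ) + (q : ℚ) = x - y + (q : ℚ) + (p : ℚ) from by ring,
      Nat.add_comm q p]
  calc ((-1 : ℚ) ^ (u + 1) * ff (y + (u : ℚ)) u * ff (x - y + (p : ℚ)) p)
      * ((-1 : ℚ) ^ (v + 1) * ff (y + (u : ℚ) + (v : ℚ)) v * ff (x - y + (p : ℚ) + (q : ℚ)) q)
      = ((-1 : ℚ) ^ (u + 1) * (-1 : ℚ) ^ (v + 1))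
        * (ff (y + (u : ℚ) + (v : ℚ)) v * ff (y + (u : ℚ)) u)
        * (ff (x - y + (p : ℚ) + (q : ℚ)) q * ff (x - y + (p : ℚ)) p) := by ring
    _ = ((-1 : ℚ) ^ (u + 1) * (-1 : ℚ) ^ (v + 1))
        * ff (y + (u : ℚ) + (v : ℚ)) (v + u)
        * ff (x - y + (p : ℚ) + (q : ℚ)) (q + p) := by rw [← h1, ← h3]
    _ = ((-1 : ℚ) ^ (u + 1) * (-1 : ℚ) ^ (v + 1))
        * ff (y + (v : ℚ) + (u : ℚ)) (u + v)
        * ff (x - y + (q : ℚ) + (p : ℚ)) (p + q) := by rw [← h2', ← h4']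
    _ = ((-1 : ℚ) ^ (u + 1) * (-1 : ℚ) ^ (v + 1))
        * (ff (y + (v : ℚ) + (u : ℚ)) u * ff (y + (v : ℚ)) v)
        * (ff (x - y + (q : ℚ) + (p : ℚ)) p * ff (x - y + (q : ℚ)) q) := by rw [h2, h4]
    _ = ((-1 : ℚ) ^ (v + 1) * ff (y + (v : ℚ)) v * ff (x - y + (q : ℚ)) q)
      * ((-1 : ℚ) ^ (u + 1) * ff (y + (v : ℚ) + (u : ℚ)) u
          * ff (x - y + (q : ℚ) + (p : ℚ)) p) := by ring

lemma K_product (n m p q : ℕ) (hp : p ≤ n) (hq : q ≤ m) (a : ℤ) (b : ℕ) :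
    Kf n p a b * Kf m q (a + n) (b + (n - p)) = Kf m q a b * Kf n p (a + m) (b + (m - q)) := by
  have key := Ksym p q (n - p) (m - q) ((a : ℚ)) ((b : ℚ))
  have e1 : (((b + (n - p)) : ℕ) : ℚ) = (b : ℚ) + ((n - p : ℕ) : ℚ) := by push_cast; ring
  have e2 : (((a + (n : ℤ)) : ℤ) : ℚ) = (a : ℚ) + (n : ℚ) := by push_cast; ring
  have e3 : (a : ℚ) + (n : ℚ) - ((b : ℚ) + ((n - p : ℕ) : ℚ)) + (q : ℚ)
      = (a : ℚ) - (b : ℚ) + (p : ℚ) + (q : ℚ) := by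
    rw [Nat.cast_sub hp]; ring
  have e1' : (((b + (m - q)) : ℕ) : ℚ) = (b : ℚ) + ((m - q : ℕ) : ℚ) := by push_cast; ring
  have e2' : (((a + (m : ℤ)) : ℤ) : ℚ) = (a : ℚ) + (m : ℚ) := by push_cast; ring
  have e3' : (a : ℚ) + (m : ℚ) - ((b : ℚ) + ((m - q : ℕ) : ℚ)) + (p : ℚ)
      = (a : ℚ) - (b : ℚ) + (q : ℚ) + (p : ℚ) := by
    rw [Nat.cast_sub hq]; ring
  simp only [Kf, e1, e2, e1', e2']
  rw [e3, e3']
  exact key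

/-- In the Maxwell case the wedge operators commute: for `deg τ_n ≤ n` and
`deg τ_m ≤ m`, `[T(τ_n), T(τ_m)] = 0` on the span of the monomials `E^a z^b`. -/
theorem maxwell_Top_commute (n m : ℕ) (τn τm : Polynomial ℚ)
    (hn : τn.degree ≤ n) (hm : τm.degree ≤ m) (f : MonSpace) :
    Tmap n τn (Tmap m τm f) - Tmap m τm (Tmap n τn f) = 0 := by
  rw [sub_eq_zero]
  funext a b
  rw [Tmap_expand n τn hn _ a b, Tmap_expand m τm hm _ a b]
  have lhs_eq : ∀ p ∈ Finset.range (n + 1),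
      τn.coeff p * Tmap n (X ^ p) (Tmap m τm f) a b
      = ∑ q ∈ Finset.range (m + 1),
          τn.coeff p * τm.coeff q * (Kf n p a b * Kf m q (a + n) (b + (n - p)))
            * f (a + n + m) (b + (n - p) + (m - q)) := by
    intro p hp
    rw [Finset.mem_range] at hp
    rw [Tmap_Xpow' n p (by omega) _ a b, Tmap_expand m τm hm _ _ _, Finset.mul_sum,
      Finset.mul_sum]
    refine Finset.sum_congr rfl fun q hq => ?_
    rw [Finset.mem_range] at hq
    rw [Tmap_Xpow' m q (by omega) f _ _]
    ring
  have rhs_eq : ∀ q ∈ Finset.range (m + 1),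
      τm.coeff q * Tmap m (X ^ q) (Tmap n τn f) a b
      = ∑ p ∈ Finset.range (n + 1),
          τm.coeff q * τn.coeff p * (Kf m q a b * Kf n p (a + m) (b + (m - q)))
            * f (a + m + n) (b + (m - q) + (n - p)) := by
    intro q hq
    rw [Finset.mem_range] at hq
    rw [Tmap_Xpow' m q (by omega) _ a b, Tmap_expand n τn hn _ _ _, Finset.mul_sum,
      Finset.mul_sum]
    refine Finset.sum_congr rfl fun p hp => ?_
    rw [Finset.mem_range] at hp
    rw [Tmap_Xpow' n p (by omega) f _ _]
    ring
  rw [Finset.sum_congr rfl lhs_eq, Finset.sum_congr rfl rhs_eq, Finset.sum_comm]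
  refine Finset.sum_congr rfl fun q hq => Finset.sum_congr rfl fun p hp => ?_
  rw [Finset.mem_range] at hp hq
  rw [K_product n m p q (by omega) (by omega) a b,
    show a + (n : ℤ) + m = a + m + n from by ring,
    show b + (n - p) + (m - q) = b + (m - q) + (n - p) from by omega]
  ring
end
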